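/- If a preorder ≽ on Δ satisfies Pareto, Converse Pareto, Sets of Utilities, and Unidimensional Expectations, then it satisfies Expectationalism: f ∼ δ_{exp(f)} for every f ∈ Δ. -/

import Mathlib

open scoped BigOperators

noncomputable section

/-- A finite-support lottery on `X`. -/
structure Lottery (X : Type*) where
  val : X →₀ ℝ
  nonneg : ∀ x, 0 ≤ val x
  total : val.sum (fun _ p => p) = 1

namespace Lottery

variable {X : Type*}

/-- The point-mass lottery at `x`. -/
def delta (x : X) : Lottery X where
  val := Finsupp.single x 1
  nonneg := fun y => by
    classical
    rw [Finsupp.single_apply]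
    split <;> norm_num
  total := by
    rw [Finsupp.sum_single_index rfl]

/-- The mixture `α • f + (1 - α) • g`. -/
def mix (α : ℝ) (h1 : 0 ≤ α) (h2 : α ≤ 1) (f g : Lottery X) : Lottery X where
  val := α • f.val + (1 - α) • g.val
  nonneg := fun x => by
    have hf := f.nonneg x
    have hg := g.nonneg x
    simp only [Finsupp.coe_add, Finsupp.coe_smul, Pi.add_apply, Pi.smul_apply, smul_eq_mul]
    nlinarith
  total := by
    rw [Finsupp.sum_add_index' (fun _ => rfl) (fun _ _ _ => rfl)]
    rw [Finsupp.sum_smul_index (fun _ => rfl), Finsupp.sum_smul_index (fun _ => rfl)]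
    rw [← Finsupp.mul_sum, ← Finsupp.mul_sum, f.total, g.total]
    ring

/-- The uniform lottery on `a` and `b`, written `a/b` in the paper. -/
def unif (a b : X) : Lottery X := mix (1/2) (by norm_num) (by norm_num) (delta a) (delta b)

/-- Strict preference. -/
def SPref (R : Lottery X → Lottery X → Prop) (f g : Lottery X) : Prop := R f g ∧ ¬ R g f

/-- Indifference. -/
def Indiff (R : Lottery X → Lottery X → Prop) (f g : Lottery X) : Prop := R f g ∧ R g f

/-- Incomparability. -/
def Incomp (R : Lottery X → Lottery X → Prop) (f g : Lottery X) : Prop := ¬ R f g ∧ ¬ R g f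

/-- Negative Dominance. -/
def NegDominance (R : Lottery X → Lottery X → Prop) : Prop :=
  ∀ f g : Lottery X, SPref R f g →
    ∃ o ∈ f.val.support, ∃ o' ∈ g.val.support, SPref R (delta o) (delta o')

/-- Independence. -/
def Independence (R : Lottery X → Lottery X → Prop) : Prop :=
  ∀ f g h : Lottery X, ∀ α : ℝ, ∀ (h1 : 0 < α) (h2 : α < 1),
    (R f g ↔ R (mix α h1.le h2.le f h) (mix α h1.le h2.le g h))

/-- The coordinatewise expectation of a lottery on `ℝ²`. -/
def expLot (f : Lottery (ℝ × ℝ)) : ℝ × ℝ :=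
  (f.val.sum fun o p => p * o.1, f.val.sum fun o p => p * o.2)

/-- Pareto. -/
def Pareto (R : Lottery (ℝ × ℝ) → Lottery (ℝ × ℝ) → Prop) : Prop :=
  ∀ x y x' y' : ℝ, x' ≤ x → y' ≤ y → R (delta (x, y)) (delta (x', y'))

/-- Converse Pareto. -/
def ConvPareto (R : Lottery (ℝ × ℝ) → Lottery (ℝ × ℝ) → Prop) : Prop :=
  ∀ x y x' y' : ℝ, R (delta (x, y)) (delta (x', y')) → x' ≤ x ∧ y' ≤ y

/-- Two outcomes are unidimensional with each other if they differ in at most one coordinate. -/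
def UniWith {A B : Type*} (o o' : A × B) : Prop := o.1 = o'.1 ∨ o.2 = o'.2

/-- A lottery is unidimensional if any two outcomes in its support are unidimensional
with each other. -/
def Unidim {A B : Type*} (f : Lottery (A × B)) : Prop :=
  ∀ o ∈ f.val.support, ∀ o' ∈ f.val.support, UniWith o o'

/-- Expectationalism. -/
def Expectationalism (R : Lottery (ℝ × ℝ) → Lottery (ℝ × ℝ) → Prop) : Prop :=
  ∀ f, Indiff R f (delta (expLot f))

/-- Unidimensional Expectations. -/
def UnidimExp (R : Lottery (ℝ × ℝ) → Lottery (ℝ × ℝ) → Prop) : Prop :=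
  ∀ f, Unidim f → Indiff R f (delta (expLot f))

end Lottery

open Lottery

/-- A mixture-preserving real-valued function on lotteries. -/
def MixPres {X : Type*} (u : Lottery X → ℝ) : Prop :=
  ∀ f g : Lottery X, ∀ α : ℝ, ∀ (h1 : 0 ≤ α) (h2 : α ≤ 1),
    u (mix α h1 h2 f g) = α * u f + (1 - α) * u g

/-- Sets of Utilities. -/
def SetsOfUtilities (R : Lottery (ℝ × ℝ) → Lottery (ℝ × ℝ) → Prop) : Prop :=
  ∃ U : Set (Lottery (ℝ × ℝ) → ℝ), U.Nonempty ∧ (∀ u ∈ U, MixPres u) ∧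
    ∀ f g : Lottery (ℝ × ℝ), (R f g ↔ ∀ u ∈ U, u g ≤ u f)

/-!
Fix a utility `u ∈ U` and put `v o := u (δ o)`. Unidimensional Expectations make `v` affine
along each coordinate line, so `v (x, y) = a + b x + c y + d x y`. Pareto makes `y ↦ v (x, y)`
nondecreasing for every `x`, i.e. `c + d x ≥ 0` for all `x`, which forces `d = 0`: `v` is affine.
Since `u` is mixture preserving and every lottery is built from point masses by mixing,
`u f = v (exp f)` for every `f`, and `f ∼ δ_{exp f}` follows.
-/

namespace Lottery

variable {X : Type*}

theorem ext {f g : Lottery X} (h : f.val = g.val) : f = g := by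
  cases f; cases g; cases h; rfl

theorem val_erase_nonneg (f : Lottery X) (o x : X) : 0 ≤ f.val.erase o x := by
  classical
  rw [Finsupp.erase_apply]
  split_ifs
  exacts [le_rfl, f.nonneg x]

theorem sum_val_erase (f : Lottery X) (o : X) :
    (f.val.erase o).sum (fun _ p => p) = 1 - f.val o := by
  have h := f.total
  rw [← Finsupp.single_add_erase o f.val,
    Finsupp.sum_add_index' (fun _ => rfl) (fun _ _ _ => rfl), Finsupp.sum_single_index rfl] at h
  linarith

theorem val_le_one (f : Lottery X) (o : X) : f.val o ≤ 1 := by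
  have h := f.sum_val_erase o
  have : 0 ≤ (f.val.erase o).sum (fun _ p => p) :=
    Finsupp.sum_nonneg fun x _ => f.val_erase_nonneg o x
  linarith

theorem eq_delta_of_val_eq_one {f : Lottery X} {o : X} (h : f.val o = 1) : f = delta o := by
  have herase : f.val.erase o = 0 := by
    have hsum := f.sum_val_erase o
    rw [h, sub_self, Finsupp.sum] at hsum
    ext x
    by_contra hx
    exact hx <| (Finset.sum_eq_zero_iff_of_nonneg fun y _ => f.val_erase_nonneg o y).1 hsum x
      (Finsupp.mem_support_iff.2 hx)
  apply ext
  rw [← Finsupp.single_add_erase o f.val, herase, add_zero, h]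
  rfl

/-- The lottery `f` conditioned on the outcome not being `o`. -/
def eraseCond (f : Lottery X) (o : X) (h : f.val o < 1) : Lottery X where
  val := (1 - f.val o)⁻¹ • f.val.erase o
  nonneg x := by
    simp only [Finsupp.coe_smul, Pi.smul_apply, smul_eq_mul]
    exact mul_nonneg (inv_nonneg.2 (by linarith)) (f.val_erase_nonneg o x)
  total := by
    rw [Finsupp.sum_smul_index (fun _ => rfl), ← Finsupp.mul_sum, sum_val_erase]
    exact inv_mul_cancel₀ (by linarith)

theorem support_eraseCond [DecidableEq X] (f : Lottery X) (o : X) (h : f.val o < 1) :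
    (f.eraseCond o h).val.support = f.val.support.erase o := by
  rw [eraseCond, Finsupp.support_smul_eq (inv_ne_zero (by linarith)), Finsupp.support_erase]

theorem eq_mix_delta_eraseCond (f : Lottery X) (o : X) (h : f.val o < 1) :
    f = mix (f.val o) (f.nonneg o) h.le (delta o) (f.eraseCond o h) := by
  apply ext
  show f.val = f.val o • (delta o).val + (1 - f.val o) • ((1 - f.val o)⁻¹ • f.val.erase o)
  rw [smul_smul, mul_inv_cancel₀ (by linarith), one_smul, delta,
    Finsupp.smul_single, smul_eq_mul, mul_one, Finsupp.single_add_erase]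

@[elab_as_elim]
theorem induction_on {motive : Lottery X → Prop} (f : Lottery X)
    (hdelta : ∀ o, motive (delta o))
    (hmix : ∀ o g p (h0 : 0 ≤ p) (h1 : p ≤ 1),
      motive g → motive (mix p h0 h1 (delta o) g)) :
    motive f := by
  classical
  induction hn : f.val.support.card using Nat.strong_induction_on generalizing f with
  | _ n ih =>
    obtain ⟨o, ho⟩ : f.val.support.Nonempty := by
      rw [Finset.nonempty_iff_ne_empty]
      intro hemp
      simpa [Finsupp.sum, hemp] using f.total
    rcases f.val_le_one o |>.lt_or_eq with hlt | heq
    · rw [f.eq_mix_delta_eraseCond o hlt]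
      refine hmix _ _ _ _ _ (ih _ ?_ _ rfl)
      rw [support_eraseCond, ← hn]
      exact Finset.card_erase_lt_of_mem ho
    · rw [eq_delta_of_val_eq_one heq]
      exact hdelta o

theorem expLot_eq_linearCombination (f : Lottery (ℝ × ℝ)) :
    expLot f = Finsupp.linearCombination ℝ id f.val := by
  rw [Finsupp.linearCombination_apply]
  ext <;> simp [expLot, Finsupp.sum, Prod.fst_sum, Prod.snd_sum]

theorem expLot_delta (o : ℝ × ℝ) : expLot (delta o) = o := by
  rw [expLot_eq_linearCombination, delta, Finsupp.linearCombination_single, one_smul, id]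

theorem expLot_mix (α : ℝ) (h0 : 0 ≤ α) (h1 : α ≤ 1) (f g : Lottery (ℝ × ℝ)) :
    expLot (mix α h0 h1 f g) = α • expLot f + (1 - α) • expLot g := by
  simp only [expLot_eq_linearCombination, mix, map_add, map_smul]

theorem unidim_mix_delta {A B : Type*} {o o' : A × B} (h : UniWith o o') (α : ℝ) (h0 : 0 ≤ α)
    (h1 : α ≤ 1) : Unidim (mix α h0 h1 (delta o) (delta o')) := by
  classical
  have hsupp : ∀ a ∈ (mix α h0 h1 (delta o) (delta o')).val.support, a = o ∨ a = o' := by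
    intro a ha
    by_contra! hne
    exact Finsupp.mem_support_iff.1 ha (by simp [mix, delta, Ne.symm hne.1, Ne.symm hne.2])
  intro a ha b hb
  rcases hsupp a ha with rfl | rfl <;> rcases hsupp b hb with rfl | rfl
  exacts [Or.inl rfl, h, h.imp Eq.symm Eq.symm, Or.inl rfl]

end Lottery

def IsMixAffine {E : Type*} [AddCommGroup E] [Module ℝ E] (v : E → ℝ) : Prop :=
  ∀ a b : E, ∀ α : ℝ, 0 ≤ α → α ≤ 1 →
    v (α • a + (1 - α) • b) = α * v a + (1 - α) * v b

theorem IsMixAffine.eq_add_mul {v : ℝ → ℝ} (hv : IsMixAffine v) (t : ℝ) :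
    v t = v 0 + t * (v 1 - v 0) := by
  simp only [IsMixAffine, smul_eq_mul] at hv
  -- for `t ∉ [0, 1]`, one of `0`, `1` is a convex combination of `t` and the other
  rcases lt_or_ge t 0 with ht | ht
  · have h1t : 0 < 1 - t := by linarith
    have h := hv t 1 (1 / (1 - t)) (by positivity) (by rw [div_le_one h1t]; linarith)
    rw [show 1 / (1 - t) * t + (1 - 1 / (1 - t)) * 1 = 0 by field_simp; ring] at h
    field_simp at h
    linarith
  rcases le_or_gt t 1 with ht1 | ht1
  · have h := hv 1 0 t ht ht1
    rw [mul_one, mul_zero, add_zero] at h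
    linarith
  · have h := hv t 0 (1 / t) (by positivity) (by rw [div_le_one (by linarith)]; linarith)
    rw [show 1 / t * t + (1 - 1 / t) * 0 = 1 by field_simp; ring] at h
    field_simp at h
    linarith

theorem eq_zero_of_forall_nonneg_add_mul {c d : ℝ} (h : ∀ x, 0 ≤ c + x * d) : d = 0 := by
  by_contra hd
  have := h ((-1 - c) / d)
  rw [div_mul_cancel₀ _ hd] at this
  linarith

theorem isMixAffine_of_uniWith {v : ℝ × ℝ → ℝ}
    (huni : ∀ o o', UniWith o o' → ∀ α : ℝ, 0 ≤ α → α ≤ 1 →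
      v (α • o + (1 - α) • o') = α * v o + (1 - α) * v o')
    (hmono : ∀ x, Monotone fun y => v (x, y)) : IsMixAffine v := by
  have hx : ∀ x y, v (x, y) = v (0, y) + x * (v (1, y) - v (0, y)) := by
    refine fun x y => IsMixAffine.eq_add_mul (v := fun x => v (x, y)) (fun x x' α h0 h1 => ?_) x
    convert huni (x, y) (x', y) (Or.inr rfl) α h0 h1 using 2
    ext <;> simp only [Prod.fst_add, Prod.snd_add, Prod.smul_fst, Prod.smul_snd, smul_eq_mul]
    ring
  have hy : ∀ x y, v (x, y) = v (x, 0) + y * (v (x, 1) - v (x, 0)) := by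
    refine fun x y => IsMixAffine.eq_add_mul (v := fun y => v (x, y)) (fun y y' α h0 h1 => ?_) y
    convert huni (x, y) (x, y') (Or.inl rfl) α h0 h1 using 2
    ext <;> simp only [Prod.fst_add, Prod.snd_add, Prod.smul_fst, Prod.smul_snd, smul_eq_mul]
    ring
  have hbilin : ∀ x y, v (x, y) = v (0, 0) + x * (v (1, 0) - v (0, 0))
      + y * (v (0, 1) - v (0, 0)) + x * y * (v (1, 1) - v (1, 0) - v (0, 1) + v (0, 0)) := by
    intro x y
    rw [hy x y, hx x 0, hx x 1]
    ring
  have hcross : v (1, 1) - v (1, 0) - v (0, 1) + v (0, 0) = 0 := by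
    refine eq_zero_of_forall_nonneg_add_mul (c := v (0, 1) - v (0, 0)) fun x => ?_
    have := hmono x zero_le_one
    simp only [hbilin x 0, hbilin x 1] at this
    linarith
  intro a b α _ _
  simp only [hbilin _ (Prod.snd _), hcross, Prod.fst_add, Prod.snd_add, Prod.smul_fst,
    Prod.smul_snd, smul_eq_mul]
  ring

theorem MixPres.eq_comp_expLot {u : Lottery (ℝ × ℝ) → ℝ} (hu : MixPres u)
    (hv : IsMixAffine (u ∘ delta)) (f : Lottery (ℝ × ℝ)) : u f = u (delta (expLot f)) := by
  induction f using Lottery.induction_on with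
  | hdelta o => rw [expLot_delta]
  | hmix o g p h0 h1 ih =>
    rw [hu, ih, expLot_mix, expLot_delta]
    exact (hv o _ p h0 h1).symm

theorem statement13_general (R : Lottery (ℝ × ℝ) → Lottery (ℝ × ℝ) → Prop)
    (hP : Pareto R) (hS : SetsOfUtilities R) (hUE : UnidimExp R) :
    Expectationalism R := by
  obtain ⟨U, -, hUmp, hiff⟩ := hS
  have hU : ∀ u ∈ U, IsMixAffine (u ∘ delta) := by
    intro u hu
    refine isMixAffine_of_uniWith (fun o o' h α h0 h1 => ?_)
      fun x y y' hy => (hiff _ _).1 (hP x y' x y le_rfl hy) u hu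
    have hind := hUE _ (unidim_mix_delta h α h0 h1)
    have heq := le_antisymm ((hiff _ _).1 hind.2 u hu) ((hiff _ _).1 hind.1 u hu)
    rw [expLot_mix, expLot_delta, expLot_delta, hUmp u hu] at heq
    exact heq.symm
  intro f
  have hf : ∀ u ∈ U, u f = u (delta (expLot f)) := fun u hu =>
    (hUmp u hu).eq_comp_expLot (hU u hu) f
  exact ⟨(hiff _ _).2 fun u hu => (hf u hu).ge, (hiff _ _).2 fun u hu => (hf u hu).le⟩

/-- A preorder on Δ satisfying Pareto, Converse Pareto, Sets of
Utilities, and Unidimensional Expectations satisfies Expectationalism. -/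
theorem statement13 (R : Lottery (ℝ × ℝ) → Lottery (ℝ × ℝ) → Prop)
    (hrefl : Reflexive R) (htrans : Transitive R)
    (hP : Pareto R) (hCP : ConvPareto R) (hS : SetsOfUtilities R) (hUE : UnidimExp R) :
    Expectationalism R :=
  statement13_general R hP hS hUE
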